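/- arXiv:1804.09563 — 7 statements merged into one kernel-verified Lean document; each statement's English description precedes it below -/
import Mathlib

section
/- Let θ be a 2×2 real matrix and D a derivation of the Lie algebra g_θ such that the range of D is contained in {0} × ℝ². Let D* : ℝ² → ℝ² be the linear map determined by D(0,v) = (0, D*v). Then D* ∘ θ = θ ∘ D* (θ viewed as a linear endomorphism of ℝ²), and consequently D* commutes with exp(tθ) for every t ∈ ℝ. -/
/-!
Bracketing with `(1, 0)` acts as `θ` on the abelian ideal `{0} × ℝ²`. Applying the derivation
rule to `[(1, 0), (0, v)] = (0, θ v)`, the term `[D(1, 0), (0, v)]` vanishes because both entries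
lie in that ideal, leaving `D* θ v = θ D* v`. A matrix commuting with `θ` commutes with
`exp (t θ)`.
-/

open Matrix

noncomputable section

/-- The matrix exponential of a `2 × 2` real matrix. -/
def expm (A : Matrix (Fin 2) (Fin 2) ℝ) : Matrix (Fin 2) (Fin 2) ℝ := NormedSpace.exp A

/-- The bracket of the Lie algebra `g_θ = ℝ ×_θ ℝ²`:
`[(a,u),(b,v)] = (0, aθv − bθu)`. -/
def br (θ : Matrix (Fin 2) (Fin 2) ℝ) (x y : ℝ × (Fin 2 → ℝ)) : ℝ × (Fin 2 → ℝ) :=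
  (0, x.1 • θ.mulVec y.2 - y.1 • θ.mulVec x.2)

theorem br_eq_zero_of_fst_eq_zero (θ : Matrix (Fin 2) (Fin 2) ℝ) {x y : ℝ × (Fin 2 → ℝ)}
    (hx : x.1 = 0) (hy : y.1 = 0) : br θ x y = 0 := by
  simp [br, hx, hy]

theorem br_one_zero (θ : Matrix (Fin 2) (Fin 2) ℝ) (v : Fin 2 → ℝ) :
    br θ (1, 0) (0, v) = (0, θ *ᵥ v) := by
  simp [br]

theorem map_mulVec_of_derivation_br (θ : Matrix (Fin 2) (Fin 2) ℝ)
    (D : (ℝ × (Fin 2 → ℝ)) →ₗ[ℝ] (ℝ × (Fin 2 → ℝ)))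
    (hder : ∀ x y : ℝ × (Fin 2 → ℝ), D (br θ x y) = br θ (D x) y + br θ x (D y))
    (hrange : ∀ x : ℝ × (Fin 2 → ℝ), (D x).1 = 0)
    (Dstar : (Fin 2 → ℝ) →ₗ[ℝ] (Fin 2 → ℝ))
    (hDstar : ∀ v : Fin 2 → ℝ, D ((0, v) : ℝ × (Fin 2 → ℝ)) = (0, Dstar v))
    (v : Fin 2 → ℝ) : Dstar (θ *ᵥ v) = θ *ᵥ Dstar v := by
  have h := hder (1, 0) (0, v)
  rw [br_eq_zero_of_fst_eq_zero θ (hrange _) rfl, hDstar, br_one_zero, br_one_zero, hDstar,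
    zero_add] at h
  exact congrArg Prod.snd h

theorem LinearMap.commute_toMatrix'_of_map_mulVec {n R : Type*} [Fintype n] [DecidableEq n]
    [CommSemiring R] (f : (n → R) →ₗ[R] n → R) (A : Matrix n n R)
    (h : ∀ v, f (A *ᵥ v) = A *ᵥ f v) : Commute (LinearMap.toMatrix' f) A := by
  refine Matrix.toLin'.injective (LinearMap.ext fun v => ?_)
  simp only [Matrix.toLin'_apply, ← Matrix.mulVec_mulVec, Matrix.toLin'_toMatrix',
    ← Matrix.toLin'_apply (LinearMap.toMatrix' f), h]

theorem LinearMap.map_exp_mulVec_of_commute {n 𝕂 : Type*} [Fintype n] [DecidableEq n] [RCLike 𝕂]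
    (f : (n → 𝕂) →ₗ[𝕂] n → 𝕂) (A : Matrix n n 𝕂) (h : Commute A (LinearMap.toMatrix' f))
    (v : n → 𝕂) : f (NormedSpace.exp A *ᵥ v) = NormedSpace.exp A *ᵥ f v := by
  have hf : ∀ w, f w = LinearMap.toMatrix' f *ᵥ w := fun w => by
    rw [← Matrix.toLin'_apply, Matrix.toLin'_toMatrix']
  rw [hf, hf, Matrix.mulVec_mulVec, Matrix.mulVec_mulVec, h.exp_left.eq]

/-- If `D` is a derivation of `g_θ` with range contained in `{0} × ℝ²`, and
`D* : ℝ² → ℝ²` is the linear map determined by `D(0,v) = (0, D*v)`, then `D* ∘ θ = θ ∘ D*`, and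
consequently `D*` commutes with `exp(tθ)` for every `t`. -/
theorem Dstar_commutes (θ : Matrix (Fin 2) (Fin 2) ℝ)
    (D : (ℝ × (Fin 2 → ℝ)) →ₗ[ℝ] (ℝ × (Fin 2 → ℝ)))
    (hder : ∀ x y : ℝ × (Fin 2 → ℝ), D (br θ x y) = br θ (D x) y + br θ x (D y))
    (hrange : ∀ x : ℝ × (Fin 2 → ℝ), (D x).1 = 0)
    (Dstar : (Fin 2 → ℝ) →ₗ[ℝ] (Fin 2 → ℝ))
    (hDstar : ∀ v : Fin 2 → ℝ, D ((0, v) : ℝ × (Fin 2 → ℝ)) = (0, Dstar v)) :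
    (∀ v : Fin 2 → ℝ, Dstar (θ.mulVec v) = θ.mulVec (Dstar v)) ∧
    (∀ (t : ℝ) (v : Fin 2 → ℝ),
      Dstar ((expm (t • θ)).mulVec v) = (expm (t • θ)).mulVec (Dstar v)) := by
  have hθ := map_mulVec_of_derivation_br θ D hder hrange Dstar hDstar
  have hcomm : Commute θ (LinearMap.toMatrix' Dstar) :=
    (Dstar.commute_toMatrix'_of_map_mulVec θ hθ).symm
  exact ⟨hθ, fun t => Dstar.map_exp_mulVec_of_commute (t • θ) (hcomm.smul_left t)⟩
end
end

section
/- Let θ be either the matrix [[1,1],[0,1]] or the matrix [[1,0],[0,λ]] with 0 < |λ| < 1, and let D be a derivation of the Lie algebra g_θ whose range is contained in {0} × ℝ². Then every complex eigenvalue of D is real; equivalently, the characteristic polynomial of D splits into linear factors over ℝ. (In the first case the induced map D* on ℝ² has the form [[α,β],[0,α]], and in the second case it is diagonal.) -/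
open Matrix Polynomial

noncomputable section

/-!
Since `D` takes values in `{0} × ℝ²`, it is block triangular and its characteristic polynomial
is `X * charpoly D*`. Applying the derivation rule to `[(1,0),(0,v)] = (0, θv)` shows that `D*`
commutes with `θ`, so `D*` preserves the fixed line of `θ`, which in both cases is `ℝ e₀`.
Thus `D*` has a real eigenvalue, and a real `2 × 2` characteristic polynomial with a real root
splits.
-/

theorem Polynomial.Splits.of_natDegree_le_two_of_isRoot {K : Type*} [Field K] {f : K[X]} {a : K}
    (hf : f.natDegree ≤ 2) (ha : f.IsRoot a) : f.Splits := by
  rw [← mul_divByMonic_eq_iff_isRoot.mpr ha, splits_X_sub_C_mul_iff]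
  apply Splits.of_natDegree_le_one
  rw [natDegree_divByMonic _ (monic_X_sub_C a), natDegree_X_sub_C]
  omega

namespace LinearMap

open Module

theorem charpoly_eq_mul_of_fst_comp_comp_inr_eq_zero {R M₁ M₂ : Type*} [CommRing R]
    [AddCommGroup M₁] [Module R M₁] [Free R M₁] [Module.Finite R M₁]
    [AddCommGroup M₂] [Module R M₂] [Free R M₂] [Module.Finite R M₂]
    (f : End R (M₁ × M₂)) (hf : fst R M₁ M₂ ∘ₗ f ∘ₗ inr R M₁ M₂ = 0) :
    f.charpoly = (fst R M₁ M₂ ∘ₗ f ∘ₗ inl R M₁ M₂).charpoly *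
      (snd R M₁ M₂ ∘ₗ f ∘ₗ inr R M₁ M₂).charpoly := by
  classical
  let b₁ := Free.chooseBasis R M₁
  let b₂ := Free.chooseBasis R M₂
  rw [← charpoly_toMatrix f (b₁.prod b₂), ← charpoly_toMatrix _ b₁, ← charpoly_toMatrix _ b₂,
    ← Matrix.charpoly_fromBlocks_zero₁₂ _ (toMatrix b₁ b₂ (snd R M₁ M₂ ∘ₗ f ∘ₗ inl R M₁ M₂))]
  congr 1
  ext (i | i) (j | j)
  · simp [toMatrix_apply]
  · simpa [toMatrix_apply] using congr(b₁.repr ($hf (b₂ j)) i)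
  · simp [toMatrix_apply]
  · simp [toMatrix_apply]

theorem charpoly_splits_of_hasEigenvalue {K V : Type*} [Field K] [AddCommGroup V] [Module K V]
    [FiniteDimensional K V] (hV : finrank K V ≤ 2) {f : End K V} {μ : K}
    (hμ : f.HasEigenvalue μ) : f.charpoly.Splits :=
  Splits.of_natDegree_le_two_of_isRoot (charpoly_natDegree f ▸ hV)
    ((End.hasEigenvalue_iff_isRoot_charpoly f μ).mp hμ)

end LinearMap

theorem Module.End.exists_hasEigenvalue_of_commute_of_eigenspace_eq_span {R M : Type*}
    [CommRing R] [AddCommGroup M] [Module R M] {f g : End R M} (hfg : Commute f g) {μ : R} {v : M}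
    (hv : v ≠ 0) (hspan : f.eigenspace μ = R ∙ v) : ∃ c, g.HasEigenvalue c := by
  have hgv : g v ∈ f.eigenspace μ :=
    mapsTo_genEigenspace_of_comm hfg μ 1
      (show v ∈ f.eigenspace μ from hspan ▸ Submodule.mem_span_singleton_self v)
  obtain ⟨c, hc⟩ := Submodule.mem_span_singleton.mp (hspan ▸ hgv)
  exact ⟨c, hasEigenvalue_of_hasEigenvector ⟨mem_eigenspace_iff.mpr hc.symm, hv⟩⟩

theorem eigenspace_toLin'_one_eq_span_single_zero (θ : Matrix (Fin 2) (Fin 2) ℝ)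
    (hθ : θ = !![1, 1; 0, 1] ∨ ∃ l : ℝ, 0 < |l| ∧ |l| < 1 ∧ θ = !![1, 0; 0, l]) :
    Module.End.eigenspace (toLin' θ) 1 = ℝ ∙ (Pi.single 0 1 : Fin 2 → ℝ) := by
  ext v
  rw [Module.End.mem_eigenspace_iff, Submodule.mem_span_singleton, one_smul, toLin'_apply,
    show v = ![v 0, v 1] by ext i; fin_cases i <;> rfl]
  rcases hθ with rfl | ⟨l, -, hl1, rfl⟩
  · simp [funext_iff, Fin.forall_fin_two, eq_comm]
  · have hl : l ≠ 1 := by rintro rfl; simp at hl1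
    simp [funext_iff, Fin.forall_fin_two, eq_comm (a := (0 : ℝ)), mul_right_eq_self₀, hl]

theorem commute_toLin'_snd_comp_comp_inr (θ : Matrix (Fin 2) (Fin 2) ℝ)
    (D : (ℝ × (Fin 2 → ℝ)) →ₗ[ℝ] (ℝ × (Fin 2 → ℝ)))
    (hder : ∀ x y : ℝ × (Fin 2 → ℝ), D (br θ x y) = br θ (D x) y + br θ x (D y))
    (hrange : ∀ x : ℝ × (Fin 2 → ℝ), (D x).1 = 0) :
    Commute (toLin' θ) (LinearMap.snd ℝ ℝ (Fin 2 → ℝ) ∘ₗ D ∘ₗ LinearMap.inr ℝ ℝ (Fin 2 → ℝ)) :=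
  LinearMap.ext fun v => by simpa [br, hrange] using congr($(hder (1, 0) (0, v)).2).symm

/-- Let `θ = [[1,1],[0,1]]` (the case `r₃`) or `θ = [[1,0],[0,λ]]` with
`0 < |λ| < 1` (the case `r_{3,λ}`), and let `D` be a derivation of `g_θ` with range contained in
`{0} × ℝ²`.  Then every complex eigenvalue of `D` is real, i.e. the characteristic polynomial of
`D` splits over `ℝ`. -/
theorem derivation_real_eigenvalues (θ : Matrix (Fin 2) (Fin 2) ℝ)
    (hθ : θ = !![1, 1; 0, 1] ∨ ∃ l : ℝ, 0 < |l| ∧ |l| < 1 ∧ θ = !![1, 0; 0, l])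
    (D : (ℝ × (Fin 2 → ℝ)) →ₗ[ℝ] (ℝ × (Fin 2 → ℝ)))
    (hder : ∀ x y : ℝ × (Fin 2 → ℝ), D (br θ x y) = br θ (D x) y + br θ x (D y))
    (hrange : ∀ x : ℝ × (Fin 2 → ℝ), (D x).1 = 0) :
    ((LinearMap.charpoly D).map (RingHom.id ℝ)).Splits := by
  have hfst : LinearMap.fst ℝ ℝ (Fin 2 → ℝ) ∘ₗ D = 0 := LinearMap.ext hrange
  obtain ⟨c, hc⟩ := Module.End.exists_hasEigenvalue_of_commute_of_eigenspace_eq_span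
    (commute_toLin'_snd_comp_comp_inr θ D hder hrange) (Pi.single_ne_zero_iff.mpr one_ne_zero)
    (eigenspace_toLin'_one_eq_span_single_zero θ hθ)
  rw [Polynomial.map_id, LinearMap.charpoly_eq_mul_of_fst_comp_comp_inr_eq_zero D
    (by rw [← LinearMap.comp_assoc, hfst, LinearMap.zero_comp]),
    ← LinearMap.comp_assoc, hfst, LinearMap.zero_comp, LinearMap.charpoly_zero]
  exact (Splits.X_pow _).mul (LinearMap.charpoly_splits_of_hasEigenvalue (by simp) hc)
end
end

section
/- Let λ ∈ ℝ and θ = [[λ,−1],[1,λ]]. If D is a derivation of the Lie algebra g_θ whose range is contained in {0} × ℝ², then the induced linear map D* : ℝ² → ℝ² (determined by D(0,v) = (0,D*v)) has the form [[α,−β],[β,α]] for some real numbers α, β. -/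
/-!
Taking `x = (1, 0)` and `y = (0, v)` in the derivation identity, and using that `D (1, 0)` has
zero first coordinate, gives `D* (θ v) = θ (D* v)`: the matrix of `D*` commutes with `θ`.
Since `θ = λ I + J` with `J` the rotation by a right angle, commuting with `θ` means commuting
with `J`, which forces the shape `[[α, -β], [β, α]]`.
-/

open Matrix

noncomputable section

theorem Matrix.eq_of_commute_fin_two {R : Type*} [CommRing R] (l : R)
    (M : Matrix (Fin 2) (Fin 2) R) (h : Commute M !![l, -1; 1, l]) :
    M = !![M 0 0, -M 1 0; M 1 0, M 0 0] := by
  have h := h.eq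
  rw [eta_fin_two M, mul_fin_two, mul_fin_two] at h
  have h₀₀ := congrFun₂ h 0 0
  have h₀₁ := congrFun₂ h 0 1
  simp only [of_apply, cons_val', cons_val_zero, cons_val_one, empty_val', cons_val_fin_one]
    at h₀₀ h₀₁
  ext i j
  fin_cases i <;> fin_cases j <;>
    simp only [Fin.zero_eta, Fin.mk_one, Fin.isValue, of_apply, cons_val', cons_val_zero,
      cons_val_one, cons_val_fin_one]
  · linear_combination h₀₀
  · linear_combination h₀₁

theorem commute_toMatrix'_of_derivation (θ : Matrix (Fin 2) (Fin 2) ℝ)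
    (D : (ℝ × (Fin 2 → ℝ)) →ₗ[ℝ] (ℝ × (Fin 2 → ℝ)))
    (hder : ∀ x y : ℝ × (Fin 2 → ℝ), D (br θ x y) = br θ (D x) y + br θ x (D y))
    (hrange : ∀ x : ℝ × (Fin 2 → ℝ), (D x).1 = 0)
    (Dstar : (Fin 2 → ℝ) →ₗ[ℝ] (Fin 2 → ℝ))
    (hDstar : ∀ v : Fin 2 → ℝ, D ((0, v) : ℝ × (Fin 2 → ℝ)) = (0, Dstar v)) :
    Commute (LinearMap.toMatrix' Dstar) θ := by
  suffices Dstar ∘ₗ toLin' θ = toLin' θ ∘ₗ Dstar by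
    simpa [Commute, SemiconjBy, LinearMap.toMatrix'_comp] using congrArg LinearMap.toMatrix' this
  refine LinearMap.ext fun v => ?_
  simpa [br, hrange, hDstar] using congrArg Prod.snd (hder (1, 0) (0, v))

/-- Let `λ ∈ ℝ` and `θ = [[λ,−1],[1,λ]]` (the Lie algebras `e` and
`r'_{3,λ}`).  If `D` is a derivation of `g_θ` whose range is contained in `{0} × ℝ²`, then the
induced map `D* : ℝ² → ℝ²` (determined by `D(0,v) = (0,D*v)`) has the form `[[α,−β],[β,α]]`. -/
theorem Dstar_conformal (l : ℝ) (θ : Matrix (Fin 2) (Fin 2) ℝ) (hθ : θ = !![l, -1; 1, l])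
    (D : (ℝ × (Fin 2 → ℝ)) →ₗ[ℝ] (ℝ × (Fin 2 → ℝ)))
    (hder : ∀ x y : ℝ × (Fin 2 → ℝ), D (br θ x y) = br θ (D x) y + br θ x (D y))
    (hrange : ∀ x : ℝ × (Fin 2 → ℝ), (D x).1 = 0)
    (Dstar : (Fin 2 → ℝ) →ₗ[ℝ] (Fin 2 → ℝ))
    (hDstar : ∀ v : Fin 2 → ℝ, D ((0, v) : ℝ × (Fin 2 → ℝ)) = (0, Dstar v)) :
    ∃ α β : ℝ, Dstar = Matrix.mulVecLin !![α, -β; β, α] := by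
  have hcomm := commute_toMatrix'_of_derivation θ D hder hrange Dstar hDstar
  subst hθ
  set M := LinearMap.toMatrix' Dstar
  refine ⟨M 0 0, M 1 0, ?_⟩
  rw [← Matrix.eq_of_commute_fin_two l M hcomm]
  exact (Matrix.toLin'_toMatrix' Dstar).symm
end
end

section
/- Let λ ∈ ℝ and θ = [[λ,−1],[1,λ]]. Every two-dimensional Lie subalgebra h of the Lie algebra g_θ equals {0} × ℝ²; that is, if h ⊆ g_θ is a Lie subalgebra with dim h = 2 then h = {0} × ℝ². -/
open Matrix

noncomputable section

open Module Submodule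

/-! If `h` had an element with nonzero `ℝ`-component, rescale it to `z = (1, u)`. By a dimension
count `h ⊓ ({0} × ℝ²)` is then a line, and `br θ z` maps it into itself by `(0, v) ↦ (0, θ v)`,
so it is spanned by `(0, v)` with `v` a real eigenvector of `θ`. But `θ = λ I + J` with `J` the
rotation by a right angle has no real eigenvector. Hence `h ⊆ {0} × ℝ²`, and the two are equal
because both have dimension 2. -/

lemma eq_zero_of_mulVec_eq_smul {l c : ℝ} {v : Fin 2 → ℝ}
    (hv : !![l, -1; 1, l] *ᵥ v = c • v) : v = 0 := by
  have h0 := congrFun hv 0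
  have h1 := congrFun hv 1
  simp only [mulVec, dotProduct, Fin.isValue, of_apply, cons_val', cons_val_fin_one, cons_val_zero,
    Fin.sum_univ_two, cons_val_one, neg_mul, one_mul, Pi.smul_apply, smul_eq_mul] at h0 h1
  funext i
  fin_cases i <;> simp <;> nlinarith [sq_nonneg (l - c), sq_nonneg (v 0), sq_nonneg (v 1)]

section BotProdTop

variable {K N : Type*} [Field K] [AddCommGroup N] [Module K N]

lemma finrank_bot_prod_top :
    finrank K ((⊥ : Submodule K K).prod (⊤ : Submodule K N)) = finrank K N := by
  have : (⊥ : Submodule K K).prod (⊤ : Submodule K N) = LinearMap.range (LinearMap.inr K K N) := by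
    ext ⟨a, v⟩
    simp [eq_comm]
  rw [this, LinearMap.finrank_range_of_inj LinearMap.inr_injective]

lemma finrank_inf_bot_prod_top_add_one [FiniteDimensional K N] {s : Submodule K (K × N)}
    (hs : ¬ s ≤ (⊥ : Submodule K K).prod ⊤) :
    finrank K ↥(s ⊓ (⊥ : Submodule K K).prod ⊤) + 1 = finrank K s := by
  have hlt := finrank_lt_finrank_of_lt (right_lt_sup.mpr hs)
  have hle := (s ⊔ (⊥ : Submodule K K).prod ⊤).finrank_le
  have hsum := finrank_sup_add_finrank_inf_eq s ((⊥ : Submodule K K).prod (⊤ : Submodule K N))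
  rw [finrank_bot_prod_top] at hlt hsum
  rw [finrank_prod, finrank_self] at hle
  omega

end BotProdTop

section

variable {θ : Matrix (Fin 2) (Fin 2) ℝ} {h : Submodule ℝ (ℝ × (Fin 2 → ℝ))}

local notation "𝔫" => Submodule.prod (⊥ : Submodule ℝ ℝ) (⊤ : Submodule ℝ (Fin 2 → ℝ))

lemma exists_mulVec_eq_smul_of_finrank_inf_eq_one (hbr : ∀ x ∈ h, ∀ y ∈ h, br θ x y ∈ h)
    (hh : ¬ h ≤ 𝔫) (hk : finrank ℝ ↥(h ⊓ 𝔫) = 1) :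
    ∃ (c : ℝ) (v : Fin 2 → ℝ), v ≠ 0 ∧ θ *ᵥ v = c • v := by
  obtain ⟨x, hx, hxn⟩ := Set.not_subset.mp hh
  have hx1 : x.1 ≠ 0 := by simpa [mem_prod] using hxn
  have hne : h ⊓ 𝔫 ≠ ⊥ := fun hbot => by
    rw [hbot, finrank_bot] at hk
    exact zero_ne_one hk
  obtain ⟨w, hwk, hw0⟩ := exists_mem_ne_zero_of_ne_bot hne
  have hw1 : w.1 = 0 := (mem_prod.mp (mem_inf.mp hwk).2).1
  have hbrk : br θ (x.1⁻¹ • x) w ∈ h ⊓ 𝔫 :=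
    ⟨hbr _ (h.smul_mem _ hx) _ (mem_inf.mp hwk).1, by simp [br]⟩
  rw [eq_span_singleton_of_mem_of_finrank_eq_one hk hwk hw0, mem_span_singleton] at hbrk
  obtain ⟨c, hc⟩ := hbrk
  refine ⟨c, w.2, fun hw2 => hw0 (Prod.ext hw1 hw2), ?_⟩
  simpa [br, hw1, hx1] using (congrArg Prod.snd hc).symm

lemma le_bot_prod_top_of_finrank_eq_two
    (hθ : ∀ (c : ℝ) (v : Fin 2 → ℝ), θ *ᵥ v = c • v → v = 0)
    (hbr : ∀ x ∈ h, ∀ y ∈ h, br θ x y ∈ h) (hdim : finrank ℝ h = 2) :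
    h ≤ 𝔫 := by
  by_contra hh
  have hk := finrank_inf_bot_prod_top_add_one hh
  obtain ⟨c, v, hv0, hv⟩ := exists_mulVec_eq_smul_of_finrank_inf_eq_one hbr hh (by omega)
  exact hv0 (hθ c v hv)

end

/-- Let `λ ∈ ℝ` and `θ = [[λ,−1],[1,λ]]`.  Every two-dimensional Lie
subalgebra `h` of `g_θ` equals `{0} × ℝ²` (the nilradical). -/
theorem two_dim_subalgebra_is_nilradical (l : ℝ) (θ : Matrix (Fin 2) (Fin 2) ℝ)
    (hθ : θ = !![l, -1; 1, l])
    (h : Submodule ℝ (ℝ × (Fin 2 → ℝ)))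
    (hbr : ∀ x ∈ h, ∀ y ∈ h, br θ x y ∈ h)
    (hdim : Module.finrank ℝ h = 2) :
    h = (⊥ : Submodule ℝ ℝ).prod (⊤ : Submodule ℝ (Fin 2 → ℝ)) := by
  subst hθ
  refine eq_of_le_of_finrank_eq
    (le_bot_prod_top_of_finrank_eq_two (fun _ _ => eq_zero_of_mulVec_eq_smul) hbr hdim) ?_
  rw [hdim, finrank_bot_prod_top, finrank_fin_fun]
end
end

section
/- Let θ be a 2×2 real matrix, D* : ℝ² → ℝ² a linear map with D* ∘ θ = θ ∘ D*, and ξ ∈ ℝ². Then the set F := {(t,v) ∈ G_θ : D*v = −Λ_t ξ} is a subgroup of G_θ: it contains the identity (0,0), is closed under the group multiplication, and is closed under inversion. (F is the set of singularities of the linear vector field X(t,v) = (0, D*v + Λ_tξ) on G_θ.) -/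
open Matrix intervalIntegral

noncomputable section

attribute [local instance] Matrix.linftyOpNormedAddCommGroup Matrix.linftyOpNormedSpace

/-- `Λ_s = ∫₀ˢ exp(uθ) du`. -/
def Lam (θ : Matrix (Fin 2) (Fin 2) ℝ) (s : ℝ) : Matrix (Fin 2) (Fin 2) ℝ :=
  ∫ u in (0:ℝ)..s, expm (u • θ)

/-- Multiplication of the group `G_θ = ℝ ×_ρ ℝ²`. -/
def gmul (θ : Matrix (Fin 2) (Fin 2) ℝ) (p q : ℝ × (Fin 2 → ℝ)) : ℝ × (Fin 2 → ℝ) :=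
  (p.1 + q.1, p.2 + (expm (p.1 • θ)).mulVec q.2)

/-- Inversion of the group `G_θ`: `(t,v)⁻¹ = (−t, −exp(−tθ)v)`. -/
def ginv (θ : Matrix (Fin 2) (Fin 2) ℝ) (p : ℝ × (Fin 2 → ℝ)) : ℝ × (Fin 2 → ℝ) :=
  (-p.1, -(expm ((-p.1) • θ)).mulVec p.2)

/-!
The map `φ(t,v) = D*v + Λ_t ξ` is a crossed homomorphism for the action of `G_θ` on `ℝ²` through
`exp(tθ)`: `φ(p q) = φ(p) + exp(tθ) φ(q)`. This follows from the cocycle identity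
`Λ_{t+s} = Λ_t + exp(tθ) Λ_s` (split the integral at `t` and shift) together with the fact that
`D*` commutes with every `exp(tθ)`. The set `F` is the zero set of `φ`, hence a subgroup.
-/

attribute [local instance] Matrix.linftyOpNormedRing Matrix.linftyOpNormedAlgebra

lemma expm_add_smul (θ : Matrix (Fin 2) (Fin 2) ℝ) (a b : ℝ) :
    expm ((a + b) • θ) = expm (a • θ) * expm (b • θ) := by
  rw [add_smul]
  exact NormedSpace.exp_add_of_commute (((Commute.refl θ).smul_left a).smul_right b)

lemma Commute.expm_smul_right {D θ : Matrix (Fin 2) (Fin 2) ℝ} (h : Commute D θ) (t : ℝ) :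
    Commute D (expm (t • θ)) :=
  (h.smul_right t).exp_right

lemma continuous_expm_smul (θ : Matrix (Fin 2) (Fin 2) ℝ) :
    Continuous fun u : ℝ => expm (u • θ) :=
  NormedSpace.exp_continuous.comp (continuous_id.smul continuous_const)

lemma Lam_zero (θ : Matrix (Fin 2) (Fin 2) ℝ) : Lam θ 0 = 0 :=
  integral_same

lemma Lam_add (θ : Matrix (Fin 2) (Fin 2) ℝ) (t s : ℝ) :
    Lam θ (t + s) = Lam θ t + expm (t • θ) * Lam θ s := by
  have hint (a b : ℝ) :=
    (continuous_expm_smul θ).intervalIntegrable (μ := MeasureTheory.volume) a b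
  have hsplit : Lam θ (t + s) = Lam θ t + ∫ u in t..(t + s), expm (u • θ) :=
    (integral_add_adjacent_intervals (hint 0 t) (hint t (t + s))).symm
  have hshift :
      (∫ u in t..(t + s), expm (u • θ)) = ∫ w in (0:ℝ)..s, expm (t • θ) * expm (w • θ) := by
    simpa only [add_zero, expm_add_smul] using
      (integral_comp_add_left (fun u => expm (u • θ)) t (a := 0) (b := s)).symm
  rw [hsplit, hshift]
  exact congrArg _
    ((ContinuousLinearMap.mul ℝ _ (expm (t • θ))).intervalIntegral_comp_comm (hint 0 s))

lemma Lam_neg (θ : Matrix (Fin 2) (Fin 2) ℝ) (t : ℝ) :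
    Lam θ (-t) = -(expm ((-t) • θ) * Lam θ t) := by
  have h := Lam_add θ (-t) t
  rw [neg_add_cancel, Lam_zero] at h
  exact eq_neg_of_add_eq_zero_left h.symm

/-- The `ℝ²`-component of the linear vector field `X(t,v) = (0, D*v + Λ_t ξ)`. -/
def linearField (θ D : Matrix (Fin 2) (Fin 2) ℝ) (ξ : Fin 2 → ℝ) (p : ℝ × (Fin 2 → ℝ)) :
    Fin 2 → ℝ :=
  D *ᵥ p.2 + Lam θ p.1 *ᵥ ξ

section linearField

variable {θ D : Matrix (Fin 2) (Fin 2) ℝ} {ξ : Fin 2 → ℝ}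

lemma linearField_eq_zero_iff (p : ℝ × (Fin 2 → ℝ)) :
    linearField θ D ξ p = 0 ↔ D *ᵥ p.2 = -(Lam θ p.1 *ᵥ ξ) :=
  eq_neg_iff_add_eq_zero.symm

lemma linearField_gmul (h : Commute D θ) (p q : ℝ × (Fin 2 → ℝ)) :
    linearField θ D ξ (gmul θ p q) =
      linearField θ D ξ p + expm (p.1 • θ) *ᵥ linearField θ D ξ q := by
  simp only [linearField, gmul, Lam_add, mulVec_add, add_mulVec, mulVec_mulVec,
    (h.expm_smul_right p.1).eq]
  abel

lemma linearField_ginv (h : Commute D θ) (p : ℝ × (Fin 2 → ℝ)) :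
    linearField θ D ξ (ginv θ p) = -(expm ((-p.1) • θ) *ᵥ linearField θ D ξ p) := by
  simp only [linearField, ginv, Lam_neg, mulVec_add, mulVec_neg, neg_mulVec, mulVec_mulVec,
    (h.expm_smul_right (-p.1)).eq]
  abel

end linearField

/-- Let `D* : ℝ² → ℝ²` be a linear map commuting with `θ` and `ξ ∈ ℝ²`.  The
set `F = {(t,v) : D*v = −Λ_t ξ}` of singularities of the linear vector field
`X(t,v) = (0, D*v + Λ_tξ)` is a subgroup of `G_θ`: it contains the identity, and is closed under
multiplication and inversion. -/
theorem singularities_subgroup (θ Dstar : Matrix (Fin 2) (Fin 2) ℝ)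
    (hcomm : Dstar * θ = θ * Dstar) (ξ : Fin 2 → ℝ) :
    ((0, 0) : ℝ × (Fin 2 → ℝ)) ∈ {p : ℝ × (Fin 2 → ℝ) | Dstar.mulVec p.2 = -(Lam θ p.1).mulVec ξ} ∧
    (∀ p ∈ {p : ℝ × (Fin 2 → ℝ) | Dstar.mulVec p.2 = -(Lam θ p.1).mulVec ξ},
      ∀ q ∈ {p : ℝ × (Fin 2 → ℝ) | Dstar.mulVec p.2 = -(Lam θ p.1).mulVec ξ},
        gmul θ p q ∈ {p : ℝ × (Fin 2 → ℝ) | Dstar.mulVec p.2 = -(Lam θ p.1).mulVec ξ}) ∧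
    (∀ p ∈ {p : ℝ × (Fin 2 → ℝ) | Dstar.mulVec p.2 = -(Lam θ p.1).mulVec ξ},
      ginv θ p ∈ {p : ℝ × (Fin 2 → ℝ) | Dstar.mulVec p.2 = -(Lam θ p.1).mulVec ξ}) := by
  have hc : Commute Dstar θ := hcomm
  have hzero (p) : p ∈ {p : ℝ × (Fin 2 → ℝ) | Dstar.mulVec p.2 = -(Lam θ p.1).mulVec ξ} ↔
      linearField θ Dstar ξ p = 0 :=
    (linearField_eq_zero_iff p).symm
  refine ⟨(hzero _).2 ?_, fun p hp q hq => (hzero _).2 ?_, fun p hp => (hzero _).2 ?_⟩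
  · simp only [linearField, mulVec_zero, Lam_zero, zero_mulVec, add_zero]
  · rw [linearField_gmul hc, (hzero p).1 hp, (hzero q).1 hq, mulVec_zero, add_zero]
  · rw [linearField_ginv hc, (hzero p).1 hp, mulVec_zero, neg_zero]
end
end

section
/- Let J = [[0,−1],[1,0]] and Λ_t := ∫₀ᵗ exp(uJ) du. Then for every ξ ∈ ℝ² and every t ∈ ℝ, the Euclidean inner product satisfies ⟨Λ_t ξ, Jξ⟩ = ‖ξ‖² − ⟨exp(tJ)ξ, ξ⟩, and this quantity is nonnegative: ⟨Λ_t ξ, Jξ⟩ ≥ 0. -/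
open Matrix intervalIntegral

noncomputable section

attribute [local instance] Matrix.linftyOpNormedAddCommGroup Matrix.linftyOpNormedSpace

/-! `J` is the matrix of multiplication by `i` on `ℂ ≅ ℝ²`, so transporting `exp (t i) = cos t + i sin t`
along the regular representation gives `exp(tJ) = cos t + sin t J`, and integrating,
`Λ_t = sin t + (1 - cos t) J`. Since `J` is skew and orthogonal, `⟨(a + bJ)ξ, ξ⟩ = a‖ξ‖²` and
`⟨(a + bJ)ξ, Jξ⟩ = b‖ξ‖²`, so both sides of the identity equal `(1 - cos t)‖ξ‖² ≥ 0`. -/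

attribute [local instance] Matrix.linftyOpNormedRing Matrix.linftyOpNormedAlgebra

local notation "J" => (!![0, -1; 1, 0] : Matrix (Fin 2) (Fin 2) ℝ)

theorem expm_leftMulMatrix_basisOneI (z : ℂ) :
    expm (Algebra.leftMulMatrix Complex.basisOneI z)
      = Algebra.leftMulMatrix Complex.basisOneI (NormedSpace.exp z) :=
  (NormedSpace.map_exp (Algebra.leftMulMatrix Complex.basisOneI)
    (Algebra.leftMulMatrix Complex.basisOneI).toLinearMap.continuous_of_finiteDimensional z).symm

theorem leftMulMatrix_basisOneI_ofReal_mul_I (t : ℝ) :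
    Algebra.leftMulMatrix Complex.basisOneI (t * Complex.I) = t • J := by
  rw [Algebra.leftMulMatrix_complex]
  ext i j; fin_cases i <;> fin_cases j <;> simp

theorem expm_smul_J (t : ℝ) : expm (t • J) = Real.cos t • 1 + Real.sin t • J := by
  rw [← leftMulMatrix_basisOneI_ofReal_mul_I, expm_leftMulMatrix_basisOneI,
    ← Complex.exp_eq_exp_ℂ, Algebra.leftMulMatrix_complex]
  ext i j; fin_cases i <;> fin_cases j <;>
    simp [Complex.exp_ofReal_mul_I_re, Complex.exp_ofReal_mul_I_im]

theorem Lam_J (t : ℝ) : Lam J t = Real.sin t • 1 + (1 - Real.cos t) • J := by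
  simp_rw [Lam, expm_smul_J]
  rw [integral_add, intervalIntegral.integral_smul_const, intervalIntegral.integral_smul_const,
    integral_cos, integral_sin]
  · simp [sub_smul]
  all_goals exact (by fun_prop : Continuous _).intervalIntegrable _ _

theorem smul_one_add_smul_J (a b : ℝ) : a • 1 + b • J = !![a, -b; b, a] := by
  ext i j; fin_cases i <;> fin_cases j <;> simp

theorem smul_one_add_smul_J_mulVec_dotProduct (a b : ℝ) (ξ : Fin 2 → ℝ) :
    (a • 1 + b • J) *ᵥ ξ ⬝ᵥ ξ = a * (ξ ⬝ᵥ ξ) := by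
  simp only [smul_one_add_smul_J, mulVec_fin_two, vec2_dotProduct, of_apply, cons_val_zero,
    cons_val_one]
  ring

theorem smul_one_add_smul_J_mulVec_dotProduct_J_mulVec (a b : ℝ) (ξ : Fin 2 → ℝ) :
    (a • 1 + b • J) *ᵥ ξ ⬝ᵥ J *ᵥ ξ = b * (ξ ⬝ᵥ ξ) := by
  simp only [smul_one_add_smul_J, mulVec_fin_two, vec2_dotProduct, of_apply, cons_val_zero,
    cons_val_one]
  ring

/-- Let `J = [[0,−1],[1,0]]` and `Λ_t = ∫₀ᵗ exp(uJ) du`.  For every `ξ ∈ ℝ²`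
and `t ∈ ℝ`, `⟨Λ_tξ, Jξ⟩ = ‖ξ‖² − ⟨exp(tJ)ξ, ξ⟩ ≥ 0`, where `⟨·,·⟩` is the Euclidean inner
product. -/
theorem rotation_barrier (ξ : Fin 2 → ℝ) (t : ℝ) :
    ((Lam !![0, -1; 1, 0] t).mulVec ξ) ⬝ᵥ ((!![0, -1; 1, 0] : Matrix (Fin 2) (Fin 2) ℝ).mulVec ξ)
        = ξ ⬝ᵥ ξ - ((expm (t • !![0, -1; 1, 0])).mulVec ξ) ⬝ᵥ ξ ∧
    0 ≤ ((Lam !![0, -1; 1, 0] t).mulVec ξ) ⬝ᵥ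
        ((!![0, -1; 1, 0] : Matrix (Fin 2) (Fin 2) ℝ).mulVec ξ) := by
  have hLam : Lam J t *ᵥ ξ ⬝ᵥ J *ᵥ ξ = (1 - Real.cos t) * (ξ ⬝ᵥ ξ) := by
    rw [Lam_J, smul_one_add_smul_J_mulVec_dotProduct_J_mulVec]
  have hexp : expm (t • J) *ᵥ ξ ⬝ᵥ ξ = Real.cos t * (ξ ⬝ᵥ ξ) := by
    rw [expm_smul_J, smul_one_add_smul_J_mulVec_dotProduct]
  refine ⟨by rw [hLam, hexp]; ring, ?_⟩
  rw [hLam]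
  exact mul_nonneg (sub_nonneg.2 (Real.cos_le_one t)) (dotProduct_self_star_nonneg ξ)
end
end

section
/- Let θ be a 2×2 real matrix, D* : ℝ² → ℝ² an invertible linear map with D* ∘ θ = θ ∘ D*, and ξ ∈ ℝ². Define π : G_θ → ℝ² by π(t,v) = exp(−tθ)D*v − Λ_{−t}ξ, set F_s := ∫₀ˢ exp(uD*) du, and let φ_s(t,v) = (t, exp(sD*)v + F_sΛ_tξ). Then for every s ∈ ℝ the semiconjugacy π ∘ φ_s = exp(sD*) ∘ π holds; i.e., the flow of the linear vector field X(t,v) = (0, D*v + Λ_tξ) projects under π to the linear flow of D* on the homogeneous space F\G_θ ≅ ℝ². -/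
open Matrix intervalIntegral

noncomputable section

attribute [local instance] Matrix.linftyOpNormedAddCommGroup Matrix.linftyOpNormedSpace

/-- The projection `π(t,v) = exp(−tθ)D*v − Λ_{−t}ξ` of `G_θ` onto `F\G_θ ≅ ℝ²`. -/
def proj (θ Dstar : Matrix (Fin 2) (Fin 2) ℝ) (ξ : Fin 2 → ℝ) (p : ℝ × (Fin 2 → ℝ)) :
    Fin 2 → ℝ :=
  (expm ((-p.1) • θ)).mulVec (Dstar.mulVec p.2) - (Lam θ (-p.1)).mulVec ξ

/-- The flow `φ_s(t,v) = (t, exp(sD*)v + F_sΛ_tξ)` of the linear vector field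
`X(t,v) = (0, D*v + Λ_tξ)`, where `F_s = ∫₀ˢ exp(uD*) du = Lam Dstar s`. -/
def flow (θ Dstar : Matrix (Fin 2) (Fin 2) ℝ) (ξ : Fin 2 → ℝ) (s : ℝ)
    (p : ℝ × (Fin 2 → ℝ)) : ℝ × (Fin 2 → ℝ) :=
  (p.1, (expm (s • Dstar)).mulVec p.2 + ((Lam Dstar s) * (Lam θ p.1)).mulVec ξ)

/-!
Because `D*` commutes with `θ`, `exp(sD*)` commutes with `exp(-tθ)`, which takes care of the
`v`-part of `π ∘ φ_s`. For the `ξ`-part, `D* F_s = exp(sD*) - 1` by the fundamental theorem of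
calculus and `exp(-tθ) Λ_t = -Λ_{-t}` by the substitution `u ↦ u - t`, so `φ_s` contributes
`(1 - exp(sD*)) Λ_{-t} ξ`, which together with the term `-Λ_{-t} ξ` of `π` gives
`-exp(sD*) Λ_{-t} ξ`.
-/

open NormedSpace

section BanachAlgebra

variable {𝔸 : Type*} [NormedRing 𝔸] [NormedAlgebra ℝ 𝔸] [CompleteSpace 𝔸]

lemma continuous_exp_smul (A : 𝔸) : Continuous fun u : ℝ => exp (u • A) :=
  (differentiable_exp_smul_const ℝ A).continuous

lemma exp_add_smul (A : 𝔸) (a b : ℝ) : exp ((a + b) • A) = exp (a • A) * exp (b • A) := by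
  have hball (x : 𝔸) : x ∈ Metric.eball (0 : 𝔸) (expSeries ℝ 𝔸).radius :=
    (expSeries_radius_eq_top ℝ 𝔸).symm ▸ edist_lt_top _ _
  rw [add_smul, exp_add_of_commute_of_mem_ball (((Commute.refl A).smul_left a).smul_right b)
    (hball _) (hball _)]

lemma integral_exp_smul_mul (A B : 𝔸) (s : ℝ) :
    (∫ u in (0:ℝ)..s, exp (u • A)) * B = ∫ u in (0:ℝ)..s, exp (u • A) * B :=
  (((ContinuousLinearMap.mul ℝ 𝔸).flip B).intervalIntegral_comp_comm
    ((continuous_exp_smul A).intervalIntegrable 0 s)).symm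

lemma mul_integral_exp_smul (A B : 𝔸) (s : ℝ) :
    B * (∫ u in (0:ℝ)..s, exp (u • A)) = ∫ u in (0:ℝ)..s, B * exp (u • A) :=
  ((ContinuousLinearMap.mul ℝ 𝔸 B).intervalIntegral_comp_comm
    ((continuous_exp_smul A).intervalIntegrable 0 s)).symm

lemma integral_exp_smul_mul_self (A : 𝔸) (s : ℝ) :
    (∫ u in (0:ℝ)..s, exp (u • A)) * A = exp (s • A) - 1 := by
  rw [integral_exp_smul_mul, integral_eq_sub_of_hasDerivAt
    (fun u _ => hasDerivAt_exp_smul_const A u)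
    (((continuous_exp_smul A).mul continuous_const).intervalIntegrable 0 s), zero_smul, exp_zero]

-- Inside the `Commute` namespace a bare `exp` would resolve to `Commute.exp`.
lemma Commute.integral_exp_smul_left {A B : 𝔸} (h : Commute A B) (s : ℝ) :
    Commute (∫ u in (0:ℝ)..s, NormedSpace.exp (u • A)) B := by
  change _ * B = B * _
  rw [integral_exp_smul_mul, mul_integral_exp_smul]
  exact integral_congr fun u _ => (Commute.exp_left (h.smul_left u)).eq

lemma exp_neg_smul_mul_integral_exp_smul (A : 𝔸) (t : ℝ) :
    exp ((-t) • A) * (∫ u in (0:ℝ)..t, exp (u • A)) = -∫ u in (0:ℝ)..-t, exp (u • A) := by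
  have hshift (u : ℝ) : exp ((-t) • A) * exp (u • A) = exp ((u - t) • A) := by
    rw [← exp_add_smul, neg_add_eq_sub]
  rw [mul_integral_exp_smul]
  simp_rw [hshift]
  rw [integral_comp_sub_right (fun u => exp (u • A)), zero_sub, sub_self, integral_symm]

end BanachAlgebra

attribute [local instance] Matrix.linftyOpNormedRing Matrix.linftyOpNormedAlgebra

lemma Lam_mul_self (θ : Matrix (Fin 2) (Fin 2) ℝ) (s : ℝ) : Lam θ s * θ = expm (s • θ) - 1 :=
  integral_exp_smul_mul_self θ s

lemma Commute.Lam_left {A B : Matrix (Fin 2) (Fin 2) ℝ} (h : Commute A B) (s : ℝ) :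
    Commute (Lam A s) B :=
  h.integral_exp_smul_left s

lemma expm_neg_smul_mul_Lam (θ : Matrix (Fin 2) (Fin 2) ℝ) (t : ℝ) :
    expm ((-t) • θ) * Lam θ t = -Lam θ (-t) :=
  exp_neg_smul_mul_integral_exp_smul θ t

theorem flow_semiconjugacy_general (θ Dstar : Matrix (Fin 2) (Fin 2) ℝ)
    (hcomm : Dstar * θ = θ * Dstar) (ξ : Fin 2 → ℝ) :
    ∀ (s : ℝ) (p : ℝ × (Fin 2 → ℝ)),
      proj θ Dstar ξ (flow θ Dstar ξ s p) = (expm (s • Dstar)).mulVec (proj θ Dstar ξ p) := by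
  rintro s ⟨t, v⟩
  set E := expm (s • Dstar)
  set R := expm ((-t) • θ)
  have hER : Commute E R := ((Commute.smul_left hcomm s).smul_right (-t)).exp
  have hDE : Commute Dstar E := ((Commute.refl Dstar).smul_right s).exp_right
  have hDF : Dstar * Lam Dstar s = E - 1 := by
    rw [← ((Commute.refl Dstar).Lam_left s).eq, Lam_mul_self]
  have hlin : R * (Dstar * E) = E * (R * Dstar) := by
    rw [hDE.eq, ← mul_assoc, ← hER.eq, mul_assoc]
  have haff : R * (Dstar * (Lam Dstar s * Lam θ t)) = Lam θ (-t) - E * Lam θ (-t) :=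
    calc R * (Dstar * (Lam Dstar s * Lam θ t)) = (R * (E - 1)) * Lam θ t := by
          rw [← mul_assoc Dstar, hDF, mul_assoc]
      _ = (E - 1) * (R * Lam θ t) := by
          rw [(hER.sub_left (Commute.one_left R)).symm.eq, mul_assoc]
      _ = Lam θ (-t) - E * Lam θ (-t) := by
          rw [expm_neg_smul_mul_Lam]; noncomm_ring
  simp only [proj, flow, mulVec_add, mulVec_sub, mulVec_mulVec]
  rw [hlin, haff, sub_mulVec]
  abel

/-- Let `D*` be invertible and commute with `θ`, and `ξ ∈ ℝ²`.  Then for every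
`s`, the semiconjugacy `π ∘ φ_s = exp(sD*) ∘ π` holds: the flow of the linear vector field
`X(t,v) = (0, D*v + Λ_tξ)` projects under `π` to the linear flow of `D*` on `F\G_θ ≅ ℝ²`. -/
theorem flow_semiconjugacy (θ Dstar : Matrix (Fin 2) (Fin 2) ℝ)
    (hunit : IsUnit Dstar) (hcomm : Dstar * θ = θ * Dstar) (ξ : Fin 2 → ℝ) :
    ∀ (s : ℝ) (p : ℝ × (Fin 2 → ℝ)),
      proj θ Dstar ξ (flow θ Dstar ξ s p) = (expm (s • Dstar)).mulVec (proj θ Dstar ξ p) :=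
  flow_semiconjugacy_general θ Dstar hcomm ξ
end
end
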